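/- arXiv:2110.14479 — 8 statements merged into one kernel-verified Lean document; each statement's English description precedes it below -/
import Mathlib

section
/- The John ellipsoid (the unique maximal-volume inscribed ellipsoid) of the product B_X^n(1) × B_P^n(1) ⊆ ℝ²ⁿ of two unit balls is the unit ball B²ⁿ(1). -/
/-!
If an ellipsoid `c + f(B)` lies in the product `K` of two unit balls, then so does `f(B)`, since
`K` is convex and symmetric and `f z` is the midpoint of `c + f z` and `-(c + f (-z))`. Every
coordinate functional is then at most `1` on `f(B)`, so every row of the matrix `M` of `f` has
length at most `1`. Thus `tr (M Mᵀ) ≤ dim`, and AM-GM on the eigenvalues of `M Mᵀ` gives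
`det M ^ 2 = det (M Mᵀ) ≤ 1`, with equality only if `M Mᵀ = 1`. Hence
`vol (c + f(B)) = |det f| vol B ≤ vol B`; in the equality case `f` is orthogonal, so `f(B) = B`,
and `c + B ⊆ K` forces `c = 0`.
-/

open Matrix MeasureTheory

section ProdLeOne
variable {ι : Type*} [Fintype ι] {x : ι → ℝ}

theorem prod_exp_sub_one_le_one (h : ∑ i, x i ≤ Fintype.card ι) :
    ∏ i, Real.exp (x i - 1) ≤ 1 := by
  rw [← Real.exp_sum, Real.exp_le_one_iff, Finset.sum_sub_distrib]
  simpa using h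

theorem prod_le_one_of_sum_le_card (hx : ∀ i, 0 ≤ x i) (h : ∑ i, x i ≤ Fintype.card ι) :
    ∏ i, x i ≤ 1 :=
  calc ∏ i, x i ≤ ∏ i, Real.exp (x i - 1) :=
        Finset.prod_le_prod (fun i _ => hx i) fun i _ => by
          linarith [Real.add_one_le_exp (x i - 1)]
    _ ≤ 1 := prod_exp_sub_one_le_one h

theorem eq_one_of_prod_eq_one_of_sum_le_card (hx : ∀ i, 0 ≤ x i)
    (h : ∑ i, x i ≤ Fintype.card ι) (hprod : ∏ i, x i = 1) (i : ι) : x i = 1 := by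
  by_contra hi
  have hpos : ∀ j, 0 < x j := fun j => (hx j).lt_of_ne fun hj =>
    one_ne_zero (hprod ▸ Finset.prod_eq_zero (Finset.mem_univ j) hj.symm)
  have hlt : ∏ j, x j < ∏ j, Real.exp (x j - 1) :=
    Finset.prod_lt_prod (fun j _ => hpos j)
      (fun j _ => by linarith [Real.add_one_le_exp (x j - 1)])
      ⟨i, Finset.mem_univ i, by linarith [Real.add_one_lt_exp (sub_ne_zero.mpr hi)]⟩
  linarith [prod_exp_sub_one_le_one h]

end ProdLeOne

namespace Matrix
variable {m : Type*} [Fintype m]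

theorem mulVec_dotProduct_mulVec_self {n R : Type*} [Fintype n] [DecidableEq n] [CommRing R]
    {M : Matrix m n R} (h : Mᵀ * M = 1) (w : n → R) : (M *ᵥ w) ⬝ᵥ (M *ᵥ w) = w ⬝ᵥ w := by
  rw [dotProduct_mulVec, ← mulVec_transpose, mulVec_mulVec, h, one_mulVec]

theorem posSemidef_self_mul_transpose (M : Matrix m m ℝ) : (M * Mᵀ).PosSemidef := by
  simpa using posSemidef_self_mul_conjTranspose M

theorem trace_mul_transpose_le_card {M : Matrix m m ℝ} (h : ∀ i, M i ⬝ᵥ M i ≤ 1) :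
    (M * Mᵀ).trace ≤ Fintype.card m := by
  simpa [trace, mul_apply, dotProduct] using Finset.sum_le_sum fun i (_ : i ∈ Finset.univ) => h i

variable [DecidableEq m]

theorem PosSemidef.det_le_one_of_trace_le_card {N : Matrix m m ℝ} (hN : N.PosSemidef)
    (h : N.trace ≤ Fintype.card m) : N.det ≤ 1 := by
  rw [hN.1.det_eq_prod_eigenvalues]
  rw [hN.1.trace_eq_sum_eigenvalues] at h
  simpa using prod_le_one_of_sum_le_card hN.eigenvalues_nonneg (by simpa using h)

theorem PosSemidef.eq_one_of_trace_le_card_of_det_eq_one {N : Matrix m m ℝ} (hN : N.PosSemidef)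
    (h : N.trace ≤ Fintype.card m) (hdet : N.det = 1) : N = 1 := by
  rw [hN.1.det_eq_prod_eigenvalues] at hdet
  rw [hN.1.trace_eq_sum_eigenvalues] at h
  have hone : hN.1.eigenvalues = 1 := funext <|
    eq_one_of_prod_eq_one_of_sum_le_card hN.eigenvalues_nonneg (by simpa using h)
      (by simpa using hdet)
  rw [hN.1.spectral_theorem, hone]
  simp

theorem det_sq_le_one_of_dotProduct_row_le_one {M : Matrix m m ℝ} (h : ∀ i, M i ⬝ᵥ M i ≤ 1) :
    M.det ^ 2 ≤ 1 := by
  simpa [det_mul, sq] using (posSemidef_self_mul_transpose M).det_le_one_of_trace_le_card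
    (trace_mul_transpose_le_card h)

theorem mul_transpose_eq_one_of_det_sq_eq_one {M : Matrix m m ℝ} (h : ∀ i, M i ⬝ᵥ M i ≤ 1)
    (hdet : M.det ^ 2 = 1) : M * Mᵀ = 1 :=
  (posSemidef_self_mul_transpose M).eq_one_of_trace_le_card_of_det_eq_one
    (trace_mul_transpose_le_card h) (by simpa [det_mul, sq] using hdet)

end Matrix

section DotProduct
variable {ι : Type*} [Fintype ι]

theorem dotProduct_self_nonneg (v : ι → ℝ) : 0 ≤ v ⬝ᵥ v := by
  simpa using dotProduct_self_star_nonneg v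

theorem abs_le_one_of_dotProduct_self_le_one {v : ι → ℝ} (hv : v ⬝ᵥ v ≤ 1) (i : ι) :
    |v i| ≤ 1 := by
  rw [abs_le_one_iff_mul_self_le_one]
  exact (Finset.single_le_sum (fun j _ => mul_self_nonneg (v j)) (Finset.mem_univ i)).trans hv

theorem convex_setOf_dotProduct_self_le_one : Convex ℝ {v : ι → ℝ | v ⬝ᵥ v ≤ 1} := by
  intro x (hx : x ⬝ᵥ x ≤ 1) y (hy : y ⬝ᵥ y ≤ 1) a b ha hb hab
  have hxy := dotProduct_self_nonneg (x - y)
  show (a • x + b • y) ⬝ᵥ (a • x + b • y) ≤ 1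
  simp only [add_dotProduct, dotProduct_add, smul_dotProduct, dotProduct_smul, smul_eq_mul,
    sub_dotProduct, dotProduct_sub, dotProduct_comm y x] at hxy ⊢
  have hab2 : a * a + 2 * (a * b) + b * b = 1 := by linear_combination (a + b + 1) * hab
  have hab0 := mul_nonneg ha hb
  nlinarith [mul_nonneg hab0 hxy, mul_nonneg (mul_self_nonneg a) (sub_nonneg.2 hx),
    mul_nonneg (mul_self_nonneg b) (sub_nonneg.2 hy), mul_nonneg hab0 (sub_nonneg.2 hx),
    mul_nonneg hab0 (sub_nonneg.2 hy)]

theorem dotProduct_self_le_one_of_forall_dotProduct_le_one {v : ι → ℝ}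
    (h : ∀ w, w ⬝ᵥ w ≤ 1 → v ⬝ᵥ w ≤ 1) : v ⬝ᵥ v ≤ 1 := by
  by_contra! hv
  obtain ⟨s, hs0, hs⟩ : ∃ s, 0 < s ∧ v ⬝ᵥ v = s ^ 2 :=
    ⟨√(v ⬝ᵥ v), by positivity, (Real.sq_sqrt (by linarith)).symm⟩
  have hs1 : s ≤ 1 := by
    simpa [hs, sq, hs0.ne'] using h (s⁻¹ • v) (by simp [hs, sq, hs0.ne'])
  nlinarith

-- Parallelogram law for `c ± eᵢ`.
theorem eq_zero_of_forall_dotProduct_add_le_one {c : ι → ℝ}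
    (h : ∀ u : ι → ℝ, u ⬝ᵥ u ≤ 1 → (c + u) ⬝ᵥ (c + u) ≤ 1) : c = 0 := by
  classical
  cases isEmpty_or_nonempty ι with
  | inl _ => exact Subsingleton.elim _ _
  | inr hι =>
    obtain ⟨i⟩ := hι
    have hu : Pi.single i 1 ⬝ᵥ Pi.single i (1 : ℝ) = 1 := by simp
    have hplus := h _ hu.le
    have hminus := h (-Pi.single i 1) (by simp)
    rw [← dotProduct_self_eq_zero]
    simp only [add_dotProduct, dotProduct_add, neg_dotProduct, dotProduct_neg, hu,
      dotProduct_comm (Pi.single i 1) c] at hplus hminus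
    linarith [dotProduct_self_nonneg c]

end DotProduct

theorem Convex.subset_of_forall_add_mem {E : Type*} [AddCommGroup E] [Module ℝ E] {K S : Set E}
    (hK : Convex ℝ K) (hK_neg : ∀ x ∈ K, -x ∈ K) (hS_neg : ∀ x ∈ S, -x ∈ S) {c : E}
    (h : ∀ x ∈ S, c + x ∈ K) : S ⊆ K := by
  intro x hx
  have hsub : x - c ∈ K := by simpa [sub_eq_add_neg] using hK_neg _ (h _ (hS_neg x hx))
  convert hK (h x hx) hsub (by norm_num : (0 : ℝ) ≤ 1 / 2) (by norm_num : (0 : ℝ) ≤ 1 / 2)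
    (by norm_num) using 1
  module

theorem MeasureTheory.Measure.addHaar_image_const_add_linearMap {E : Type*}
    [NormedAddCommGroup E] [NormedSpace ℝ E] [MeasurableSpace E] [BorelSpace E]
    [FiniteDimensional ℝ E] (μ : Measure E) [μ.IsAddHaarMeasure] (c : E) (f : E →ₗ[ℝ] E)
    (s : Set E) : μ ((fun z => c + f z) '' s) = ENNReal.ofReal |LinearMap.det f| * μ s := by
  rw [show (fun z => c + f z) = (c + ·) ∘ f from rfl, Set.image_comp, Set.image_add_left,
    measure_preimage_add, Measure.addHaar_image_linearMap]

section ProductOfBalls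
variable {ι κ : Type*} [Fintype ι] [Fintype κ]

instance : (volume : Measure ((ι → ℝ) × (κ → ℝ))).IsAddHaarMeasure :=
  Measure.prod.instIsAddHaarMeasure volume volume

def euclideanUnitBall (ι κ : Type*) [Fintype ι] [Fintype κ] : Set ((ι → ℝ) × (κ → ℝ)) :=
  {z | z.1 ⬝ᵥ z.1 + z.2 ⬝ᵥ z.2 ≤ 1}

def unitBallProd (ι κ : Type*) [Fintype ι] [Fintype κ] : Set ((ι → ℝ) × (κ → ℝ)) :=
  {z | z.1 ⬝ᵥ z.1 ≤ 1 ∧ z.2 ⬝ᵥ z.2 ≤ 1}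

theorem euclideanUnitBall_subset_unitBallProd : euclideanUnitBall ι κ ⊆ unitBallProd ι κ :=
  fun z (hz : z.1 ⬝ᵥ z.1 + z.2 ⬝ᵥ z.2 ≤ 1) => ⟨by linarith [dotProduct_self_nonneg z.2],
    by linarith [dotProduct_self_nonneg z.1]⟩

theorem neg_mem_euclideanUnitBall {z : (ι → ℝ) × (κ → ℝ)} (hz : z ∈ euclideanUnitBall ι κ) :
    -z ∈ euclideanUnitBall ι κ := by
  simpa [euclideanUnitBall] using hz

theorem neg_mem_unitBallProd {z : (ι → ℝ) × (κ → ℝ)} (hz : z ∈ unitBallProd ι κ) :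
    -z ∈ unitBallProd ι κ := by
  simpa [unitBallProd] using hz

theorem convex_unitBallProd : Convex ℝ (unitBallProd ι κ) :=
  convex_setOf_dotProduct_self_le_one.prod convex_setOf_dotProduct_self_le_one

theorem unitBallProd_subset_closedBall : unitBallProd ι κ ⊆ Metric.closedBall 0 1 := by
  rintro z ⟨h1, h2⟩
  rw [mem_closedBall_zero_iff, Prod.norm_def, max_le_iff,
    pi_norm_le_iff_of_nonneg zero_le_one, pi_norm_le_iff_of_nonneg zero_le_one]
  exact ⟨abs_le_one_of_dotProduct_self_le_one h1, abs_le_one_of_dotProduct_self_le_one h2⟩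

theorem isCompact_euclideanUnitBall : IsCompact (euclideanUnitBall ι κ) :=
  Metric.isCompact_of_isClosed_isBounded (isClosed_le (by fun_prop) continuous_const)
    (Metric.isBounded_closedBall.subset
      (euclideanUnitBall_subset_unitBallProd.trans unitBallProd_subset_closedBall))

theorem volume_euclideanUnitBall_ne_zero : volume (euclideanUnitBall ι κ) ≠ 0 := by
  have hopen : IsOpen {z : (ι → ℝ) × (κ → ℝ) | z.1 ⬝ᵥ z.1 + z.2 ⬝ᵥ z.2 < 1} :=
    isOpen_lt (by fun_prop) continuous_const
  exact ((hopen.measure_pos volume ⟨0, by simp⟩).trans_le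
    (measure_mono (Set.ofPred_subset_ofPred.2 fun _ => le_of_lt))).ne'

theorem eq_zero_of_forall_add_mem_unitBallProd {c : (ι → ℝ) × (κ → ℝ)}
    (h : ∀ z ∈ euclideanUnitBall ι κ, c + z ∈ unitBallProd ι κ) : c = 0 :=
  Prod.ext
    (eq_zero_of_forall_dotProduct_add_le_one fun u hu =>
      by simpa using (h (u, 0) (by simpa [euclideanUnitBall] using hu)).1)
    (eq_zero_of_forall_dotProduct_add_le_one fun u hu =>
      by simpa using (h (0, u) (by simpa [euclideanUnitBall] using hu)).2)

theorem image_subset_unitBallProd_of_image_add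
    {f : ((ι → ℝ) × (κ → ℝ)) →ₗ[ℝ] (ι → ℝ) × (κ → ℝ)} {c : (ι → ℝ) × (κ → ℝ)}
    (h : (fun z => c + f z) '' euclideanUnitBall ι κ ⊆ unitBallProd ι κ) :
    f '' euclideanUnitBall ι κ ⊆ unitBallProd ι κ :=
  convex_unitBallProd.subset_of_forall_add_mem (fun _ => neg_mem_unitBallProd)
    (by rintro _ ⟨z, hz, rfl⟩; exact ⟨-z, neg_mem_euclideanUnitBall hz, map_neg f z⟩)
    (by rintro _ ⟨z, hz, rfl⟩; exact h ⟨z, hz, rfl⟩)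

section MatrixOfMap
variable [DecidableEq ι] [DecidableEq κ]

noncomputable def LinearMap.toMatrixProd (f : ((ι → ℝ) × (κ → ℝ)) →ₗ[ℝ] (ι → ℝ) × (κ → ℝ)) :
    Matrix (ι ⊕ κ) (ι ⊕ κ) ℝ :=
  LinearMap.toMatrix ((Pi.basisFun ℝ ι).prod (Pi.basisFun ℝ κ))
    ((Pi.basisFun ℝ ι).prod (Pi.basisFun ℝ κ)) f

variable {f : ((ι → ℝ) × (κ → ℝ)) →ₗ[ℝ] (ι → ℝ) × (κ → ℝ)}

theorem LinearMap.det_toMatrixProd : f.toMatrixProd.det = LinearMap.det f :=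
  LinearMap.det_toMatrix _ f

theorem LinearMap.toMatrixProd_mulVec (z : (ι → ℝ) × (κ → ℝ)) :
    f.toMatrixProd *ᵥ Sum.elim z.1 z.2 = Sum.elim (f z).1 (f z).2 := by
  have hrepr : ∀ z : (ι → ℝ) × (κ → ℝ),
      ⇑(((Pi.basisFun ℝ ι).prod (Pi.basisFun ℝ κ)).repr z) = Sum.elim z.1 z.2 := by
    intro z; ext (i | i) <;> simp
  rw [← hrepr, ← hrepr, toMatrixProd, LinearMap.toMatrix_mulVec_repr]

theorem LinearMap.dotProduct_toMatrixProd_row_le_one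
    (hf : f '' euclideanUnitBall ι κ ⊆ unitBallProd ι κ) (i : ι ⊕ κ) :
    f.toMatrixProd i ⬝ᵥ f.toMatrixProd i ≤ 1 := by
  refine dotProduct_self_le_one_of_forall_dotProduct_le_one fun w hw => ?_
  obtain ⟨z, rfl⟩ : ∃ z : (ι → ℝ) × (κ → ℝ), Sum.elim z.1 z.2 = w :=
    ⟨LinearEquiv.sumArrowLequivProdArrow ι κ ℝ ℝ w, Sum.elim_comp_inl_inr w⟩
  have hfz : f z ∈ unitBallProd ι κ :=
    hf ⟨z, (by simpa using hw : z.1 ⬝ᵥ z.1 + z.2 ⬝ᵥ z.2 ≤ 1), rfl⟩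
  change (f.toMatrixProd *ᵥ Sum.elim z.1 z.2) i ≤ 1
  rw [toMatrixProd_mulVec]
  cases i with
  | inl i => exact (le_abs_self _).trans (abs_le_one_of_dotProduct_self_le_one hfz.1 i)
  | inr i => exact (le_abs_self _).trans (abs_le_one_of_dotProduct_self_le_one hfz.2 i)

theorem LinearMap.abs_det_le_one_of_image_subset
    (hf : f '' euclideanUnitBall ι κ ⊆ unitBallProd ι κ) : |LinearMap.det f| ≤ 1 := by
  rw [← det_toMatrixProd, ← sq_le_one_iff_abs_le_one]
  exact det_sq_le_one_of_dotProduct_row_le_one (dotProduct_toMatrixProd_row_le_one hf)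

theorem LinearMap.dotProduct_map_self_eq_of_abs_det_eq_one
    (hf : f '' euclideanUnitBall ι κ ⊆ unitBallProd ι κ) (hdet : |LinearMap.det f| = 1)
    (z : (ι → ℝ) × (κ → ℝ)) :
    (f z).1 ⬝ᵥ (f z).1 + (f z).2 ⬝ᵥ (f z).2 = z.1 ⬝ᵥ z.1 + z.2 ⬝ᵥ z.2 := by
  have horth : f.toMatrixProdᵀ * f.toMatrixProd = 1 :=
    mul_eq_one_comm.mp <| mul_transpose_eq_one_of_det_sq_eq_one
      (dotProduct_toMatrixProd_row_le_one hf) (by rw [det_toMatrixProd, ← sq_abs, hdet, one_pow])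
  rw [← sumElim_dotProduct_sumElim, ← sumElim_dotProduct_sumElim, ← toMatrixProd_mulVec,
    mulVec_dotProduct_mulVec_self horth]

end MatrixOfMap

theorem LinearEquiv.image_euclideanUnitBall (f : ((ι → ℝ) × (κ → ℝ)) ≃ₗ[ℝ] (ι → ℝ) × (κ → ℝ))
    (hf : ∀ z, (f z).1 ⬝ᵥ (f z).1 + (f z).2 ⬝ᵥ (f z).2 = z.1 ⬝ᵥ z.1 + z.2 ⬝ᵥ z.2) :
    f '' euclideanUnitBall ι κ = euclideanUnitBall ι κ := by
  ext z
  rw [f.image_eq_preimage_symm]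
  change (f.symm z).1 ⬝ᵥ (f.symm z).1 + (f.symm z).2 ⬝ᵥ (f.symm z).2 ≤ 1 ↔ _
  rw [← hf, f.apply_symm_apply]
  rfl

theorem volume_image_add_le_of_subset_unitBallProd
    {f : ((ι → ℝ) × (κ → ℝ)) →ₗ[ℝ] (ι → ℝ) × (κ → ℝ)} {c : (ι → ℝ) × (κ → ℝ)}
    (h : (fun z => c + f z) '' euclideanUnitBall ι κ ⊆ unitBallProd ι κ) :
    volume ((fun z => c + f z) '' euclideanUnitBall ι κ) ≤ volume (euclideanUnitBall ι κ) := by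
  classical
  rw [Measure.addHaar_image_const_add_linearMap]
  exact mul_le_of_le_one_left' <| ENNReal.ofReal_le_one.2 <|
    f.abs_det_le_one_of_image_subset (image_subset_unitBallProd_of_image_add h)

theorem LinearEquiv.image_add_eq_of_volume_eq
    (f : ((ι → ℝ) × (κ → ℝ)) ≃ₗ[ℝ] (ι → ℝ) × (κ → ℝ)) {c : (ι → ℝ) × (κ → ℝ)}
    (h : (fun z => c + f z) '' euclideanUnitBall ι κ ⊆ unitBallProd ι κ)
    (hvol : volume ((fun z => c + f z) '' euclideanUnitBall ι κ) =
      volume (euclideanUnitBall ι κ)) :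
    (fun z => c + f z) '' euclideanUnitBall ι κ = euclideanUnitBall ι κ := by
  classical
  have hf := image_subset_unitBallProd_of_image_add (f := f.toLinearMap) h
  have hdet : |LinearMap.det f.toLinearMap| = 1 := by
    have himage := Measure.addHaar_image_const_add_linearMap volume c f.toLinearMap
      (euclideanUnitBall ι κ)
    simp only [LinearEquiv.coe_coe] at himage
    rw [himage, ENNReal.mul_eq_right volume_euclideanUnitBall_ne_zero
      isCompact_euclideanUnitBall.measure_ne_top] at hvol
    exact ENNReal.ofReal_eq_one.1 hvol
  have hfB := f.image_euclideanUnitBall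
    (f.toLinearMap.dotProduct_map_self_eq_of_abs_det_eq_one hf hdet)
  obtain rfl : c = 0 := eq_zero_of_forall_add_mem_unitBallProd fun z hz => by
    rw [← hfB] at hz
    obtain ⟨y, hy, rfl⟩ := hz
    exact h ⟨y, hy, rfl⟩
  simpa using hfB

end ProductOfBalls

/-- the John ellipsoid (unique maximal-volume inscribed ellipsoid)
of the product `B_X^n(1) × B_P^n(1)` of two unit balls is the unit ball
`B²ⁿ(1)`.  Ellipsoids are the affine images of the unit Euclidean ball under
invertible linear maps. -/
theorem john_ellipsoid_of_product_of_balls {n : ℕ} :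
    -- the unit ball is contained in the product of balls
    {z : (Fin n → ℝ) × (Fin n → ℝ) | z.1 ⬝ᵥ z.1 + z.2 ⬝ᵥ z.2 ≤ 1}
      ⊆ {z | z.1 ⬝ᵥ z.1 ≤ 1 ∧ z.2 ⬝ᵥ z.2 ≤ 1} ∧
    -- and any ellipsoid contained in the product of balls has volume at most
    -- that of the unit ball, with equality only for the unit ball itself
    ∀ (f : ((Fin n → ℝ) × (Fin n → ℝ)) ≃ₗ[ℝ] ((Fin n → ℝ) × (Fin n → ℝ)))
      (c : (Fin n → ℝ) × (Fin n → ℝ)),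
      (fun z => c + f z) '' {z | z.1 ⬝ᵥ z.1 + z.2 ⬝ᵥ z.2 ≤ 1}
          ⊆ {z | z.1 ⬝ᵥ z.1 ≤ 1 ∧ z.2 ⬝ᵥ z.2 ≤ 1} →
        volume ((fun z => c + f z) '' {z | z.1 ⬝ᵥ z.1 + z.2 ⬝ᵥ z.2 ≤ 1})
            ≤ volume {z : (Fin n → ℝ) × (Fin n → ℝ) | z.1 ⬝ᵥ z.1 + z.2 ⬝ᵥ z.2 ≤ 1} ∧
        (volume ((fun z => c + f z) '' {z | z.1 ⬝ᵥ z.1 + z.2 ⬝ᵥ z.2 ≤ 1})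
            = volume {z : (Fin n → ℝ) × (Fin n → ℝ) | z.1 ⬝ᵥ z.1 + z.2 ⬝ᵥ z.2 ≤ 1} →
          (fun z => c + f z) '' {z | z.1 ⬝ᵥ z.1 + z.2 ⬝ᵥ z.2 ≤ 1}
            = {z : (Fin n → ℝ) × (Fin n → ℝ) | z.1 ⬝ᵥ z.1 + z.2 ⬝ᵥ z.2 ≤ 1}) :=
  ⟨euclideanUnitBall_subset_unitBallProd, fun f _ h =>
    ⟨volume_image_add_le_of_subset_unitBallProd (f := f.toLinearMap) h,
      f.image_add_eq_of_volume_eq h⟩⟩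
end

section
/- Let M be a matrix that is both symmetric positive definite and symplectic (MᵀJM = J where J = [[0, I],[-I, 0]]), with blocks M = [[M_XX, M_XP],[M_PX, M_PP]]. Then the Schur complements satisfy M/M_PP = M_PP⁻¹ and M/M_XX = M_XX⁻¹. -/
open Matrix

lemma posDef_blocks_aux {m : Type*} [Fintype m] [DecidableEq m]
    {A B C D : Matrix m m ℝ} (h : (Matrix.fromBlocks A B C D).PosDef) :
    A.PosDef ∧ D.PosDef := by
  obtain ⟨h1, h2⟩ := Matrix.posDef_iff_dotProduct_mulVec.mp h
  have hA : A.IsHermitian := by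
    have := congrArg Matrix.toBlocks₁₁ h1
    simpa [Matrix.fromBlocks_conjTranspose, Matrix.fromBlocks_transpose, Matrix.toBlocks_fromBlocks₁₁,
      Matrix.IsHermitian] using this
  have hD : D.IsHermitian := by
    have := congrArg Matrix.toBlocks₂₂ h1
    simpa [Matrix.fromBlocks_conjTranspose, Matrix.fromBlocks_transpose, Matrix.toBlocks_fromBlocks₂₂,
      Matrix.IsHermitian] using this
  refine ⟨Matrix.posDef_iff_dotProduct_mulVec.mpr ⟨hA, fun x hx => ?_⟩,
    Matrix.posDef_iff_dotProduct_mulVec.mpr ⟨hD, fun x hx => ?_⟩⟩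
  · have hx' : (Sum.elim x 0 : m ⊕ m → ℝ) ≠ 0 := by
      intro hc
      exact hx (funext fun i => congrFun hc (Sum.inl i))
    have := h2 (x := Sum.elim x 0) hx'
    simpa [Matrix.fromBlocks_mulVec, sumElim_dotProduct_sumElim] using this
  · have hx' : (Sum.elim 0 x : m ⊕ m → ℝ) ≠ 0 := by
      intro hc
      exact hx (funext fun i => congrFun hc (Sum.inr i))
    have := h2 (x := Sum.elim 0 x) hx'
    simpa [Matrix.fromBlocks_mulVec, sumElim_dotProduct_sumElim] using this

/-- for a symmetric positive definite symplectic matrix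
`M = [[M_XX, M_XP],[M_PX, M_PP]]`, the Schur complements satisfy
`M/M_PP = M_PP⁻¹` and `M/M_XX = M_XX⁻¹`. -/
theorem schur_complements_of_symmetric_symplectic {n : ℕ}
    (MXX MXP MPX MPP : Matrix (Fin n) (Fin n) ℝ)
    (hM : (Matrix.fromBlocks MXX MXP MPX MPP).PosDef)
    (hMPX : MPX = MXPᵀ)
    (hsympl : (Matrix.fromBlocks MXX MXP MPX MPP)ᵀ *
        (Matrix.fromBlocks 0 1 (-1) 0) * (Matrix.fromBlocks MXX MXP MPX MPP)
        = Matrix.fromBlocks 0 1 (-1) 0) :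
    MXX - MXP * MPP⁻¹ * MPX = MPP⁻¹ ∧ MPP - MPX * MXX⁻¹ * MXP = MXX⁻¹ := by
  obtain ⟨hAX, hDP⟩ := posDef_blocks_aux hM
  -- symmetry of the blocks
  have hXX : MXXᵀ = MXX := hAX.1
  have hPP : MPPᵀ = MPP := hDP.1
  have hPXT : MPXᵀ = MXP := by rw [hMPX, Matrix.transpose_transpose]
  -- expand the symplectic condition
  rw [Matrix.fromBlocks_transpose, Matrix.fromBlocks_multiply, Matrix.fromBlocks_multiply]
    at hsympl
  have e11 := congrArg Matrix.toBlocks₁₁ hsympl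
  have e12 := congrArg Matrix.toBlocks₁₂ hsympl
  have e21 := congrArg Matrix.toBlocks₂₁ hsympl
  have e22 := congrArg Matrix.toBlocks₂₂ hsympl
  simp only [Matrix.toBlocks_fromBlocks₁₁, Matrix.toBlocks_fromBlocks₁₂,
    Matrix.toBlocks_fromBlocks₂₁, Matrix.toBlocks_fromBlocks₂₂,
    Matrix.mul_zero, Matrix.zero_mul, Matrix.mul_one, Matrix.mul_neg,
    Matrix.neg_mul, zero_add, add_zero, hXX, hPP, hPXT, hMPX,
    Matrix.transpose_transpose] at e11 e12 e21 e22
  rw [neg_add_eq_zero] at e11 e22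
  rw [neg_add_eq_sub] at e12 e21
  -- e11 : MXP * MXX = MXX * MXPᵀ
  -- e12 : MXX * MPP - MXP * MXP = 1
  -- e21 : MXPᵀ * MXPᵀ - MPP * MXX = -1
  -- e22 : MPP * MXP = MXPᵀ * MPP
  have key2 : MPP * MXX - MXPᵀ * MXPᵀ = 1 := by
    rw [← neg_sub, e21, neg_neg]
  have hPPinv : MPP⁻¹ * MPP = 1 :=
    Matrix.nonsing_inv_mul MPP (isUnit_iff_ne_zero.mpr hDP.det_pos.ne')
  have hXXinv : MXX⁻¹ * MXX = 1 :=
    Matrix.nonsing_inv_mul MXX (isUnit_iff_ne_zero.mpr hAX.det_pos.ne')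
  refine ⟨(Matrix.inv_eq_left_inv ?_).symm, (Matrix.inv_eq_left_inv ?_).symm⟩
  · rw [hMPX, Matrix.sub_mul, Matrix.mul_assoc (MXP * MPP⁻¹) MXPᵀ MPP, ← e22,
      ← Matrix.mul_assoc (MXP * MPP⁻¹) MPP MXP, Matrix.mul_assoc MXP MPP⁻¹ MPP,
      hPPinv, Matrix.mul_one]
    exact e12
  · rw [hMPX, Matrix.sub_mul, Matrix.mul_assoc (MXPᵀ * MXX⁻¹) MXP MXX, e11,
      ← Matrix.mul_assoc (MXPᵀ * MXX⁻¹) MXX MXPᵀ, Matrix.mul_assoc MXPᵀ MXX⁻¹ MXX,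
      hXXinv, Matrix.mul_one]
    exact key2
end

section
/- Let M be a symmetric positive definite symplectic 2n×2n matrix with blocks M_XX, M_XP, M_PX = M_XPᵀ, M_PP. Then the matrix M_XP has only real eigenvalues, M_XP² ≥ 0 as a symmetric-conjugate of a product, and consequently M_XX M_PP ≥ I (i.e., M_XX^{1/2} M_PP M_XX^{1/2} ≥ I in the Loewner order). -/
open Matrix

private lemma posDef_of_posSemidef_isUnit {n : ℕ} {S : Matrix (Fin n) (Fin n) ℝ}
    (h : S.PosSemidef) (hu : IsUnit S) : S.PosDef := by
  refine Matrix.posDef_iff_dotProduct_mulVec.mpr ⟨h.1, fun x hx => ?_⟩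
  rcases lt_or_eq_of_le (h.dotProduct_mulVec_nonneg x) with hlt | heq
  · exact hlt
  · exfalso
    apply hx
    have h0 : S *ᵥ x = 0 := (h.dotProduct_mulVec_zero_iff x).1 heq.symm
    have hinj := Matrix.mulVec_injective_iff_isUnit.mpr hu
    have : S *ᵥ x = S *ᵥ 0 := by simpa using h0
    exact hinj this

/-- for a symmetric positive definite symplectic matrix `M` with
blocks `M_XX, M_XP, M_PX = M_XPᵀ, M_PP`, the block `M_XP` has only real
eigenvalues, `M_XP²` is positive semidefinite after conjugation by
`M_XX^{1/2}`, and consequently `M_XX^{1/2} M_PP M_XX^{1/2} ≥ I` in the Loewner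
order. -/
theorem block_eigenvalues_real_and_MXXMPP_ge_one {n : ℕ}
    (MXX MXP MPX MPP : Matrix (Fin n) (Fin n) ℝ)
    (hM : (Matrix.fromBlocks MXX MXP MPX MPP).PosDef)
    (hMPX : MPX = MXPᵀ)
    (hsympl : (Matrix.fromBlocks MXX MXP MPX MPP)ᵀ *
        (Matrix.fromBlocks 0 1 (-1) 0) * (Matrix.fromBlocks MXX MXP MPX MPP)
        = Matrix.fromBlocks 0 1 (-1) 0) :
    (∀ μ ∈ spectrum ℂ (MXP.map (algebraMap ℝ ℂ)), μ.im = 0) ∧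
    (∀ Q : Matrix (Fin n) (Fin n) ℝ, Q.PosDef → Qᵀ = Q → Q * Q = MXX →
      (Q⁻¹ * (MXP * MXP) * Q).PosSemidef ∧
      (Q * MPP * Q - 1).PosSemidef) := by
  -- M is symmetric
  have hMsymm : (Matrix.fromBlocks MXX MXP MPX MPP)ᵀ
      = Matrix.fromBlocks MXX MXP MPX MPP := by
    have := hM.1
    rwa [Matrix.IsHermitian, Matrix.conjTranspose_eq_transpose_of_trivial] at this
  rw [hMsymm] at hsympl
  rw [Matrix.fromBlocks_multiply, Matrix.fromBlocks_multiply] at hsympl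
  have e11 := congrArg Matrix.toBlocks₁₁ hsympl
  have e12 := congrArg Matrix.toBlocks₁₂ hsympl
  simp only [Matrix.toBlocks_fromBlocks₁₁, Matrix.toBlocks_fromBlocks₁₂,
    Matrix.mul_zero, Matrix.mul_one, Matrix.mul_neg, zero_add,
    add_zero, Matrix.zero_mul, Matrix.neg_mul, Matrix.one_mul, neg_mul] at e11 e12
  -- e11 : -(MXP * MXX) + MXX * MPX = 0 ; e12 : -(MXP * MXP) + MXX * MPP = 1
  have eq1 : MXX * MPX = MXP * MXX := (neg_add_eq_zero.mp e11).symm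
  have eq2 : MXX * MPP = 1 + MXP * MXP := by rw [← e12]; abel
  -- MXX is positive definite
  have hMXXsymm : MXXᵀ = MXX := by
    have := congrArg Matrix.toBlocks₁₁ hMsymm
    simpa [Matrix.fromBlocks_transpose] using this
  have hMXX : MXX.PosDef := by
    refine Matrix.posDef_iff_dotProduct_mulVec.mpr ⟨?_, fun x hx => ?_⟩
    · rw [Matrix.IsHermitian, Matrix.conjTranspose_eq_transpose_of_trivial]
      exact hMXXsymm
    · have hy : (Sum.elim x (0 : Fin n → ℝ)) ≠ 0 := by
        intro h
        exact hx (funext fun i => congrFun h (Sum.inl i))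
      have := hM.dotProduct_mulVec_pos hy
      simpa [Matrix.fromBlocks_mulVec, Function.star_sumElim,
        sumElim_dotProduct_sumElim] using this
  -- the key claim, with symmetry of the conjugated block included
  have main : ∀ Q : Matrix (Fin n) (Fin n) ℝ, Q.PosDef → Qᵀ = Q → Q * Q = MXX →
      (Q⁻¹ * MXP * Q)ᵀ = Q⁻¹ * MXP * Q ∧
      (Q⁻¹ * (MXP * MXP) * Q).PosSemidef ∧
      (Q * MPP * Q - 1).PosSemidef := by
    intro Q hQ hQsymm hQQ
    have hdet : IsUnit Q.det := hQ.det_pos.ne'.isUnit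
    have c1 : Q⁻¹ * Q = 1 := Matrix.nonsing_inv_mul Q hdet
    have c2 : Q * Q⁻¹ = 1 := Matrix.mul_nonsing_inv Q hdet
    set A := Q⁻¹ * MXP * Q with hA
    have hAsymm : Aᵀ = A := by
      have step : Q * (Q * MPX * Q⁻¹) = Q * A := by
        calc Q * (Q * MPX * Q⁻¹) = (Q * Q) * MPX * Q⁻¹ := by
              simp only [Matrix.mul_assoc]
          _ = MXP * (Q * Q) * Q⁻¹ := by rw [hQQ, eq1, ← hQQ]
          _ = MXP * Q * (Q * Q⁻¹) := by simp only [Matrix.mul_assoc]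
          _ = MXP * Q := by rw [c2, Matrix.mul_one]
          _ = Q * A := by
              rw [hA, ← Matrix.mul_assoc, ← Matrix.mul_assoc, c2, Matrix.one_mul]
      have step2 : Q * MPX * Q⁻¹ = A := by
        have := congrArg (fun X => Q⁻¹ * X) step
        simpa [← Matrix.mul_assoc, c1] using this
      calc Aᵀ = Qᵀ * MXPᵀ * (Q⁻¹)ᵀ := by
            rw [hA, Matrix.transpose_mul, Matrix.transpose_mul, Matrix.mul_assoc]
        _ = Q * MPX * Q⁻¹ := by
            rw [hQsymm, ← hMPX, Matrix.transpose_nonsing_inv, hQsymm]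
        _ = A := step2
    have hAA : Q⁻¹ * (MXP * MXP) * Q = A * A := by
      rw [hA]
      calc Q⁻¹ * (MXP * MXP) * Q
          = Q⁻¹ * MXP * (Q * Q⁻¹) * MXP * Q := by
            rw [c2]; simp only [Matrix.mul_assoc, Matrix.one_mul]
        _ = Q⁻¹ * MXP * Q * (Q⁻¹ * MXP * Q) := by simp only [Matrix.mul_assoc]
    have hAApsd : (A * A).PosSemidef := by
      have : A * A = Aᴴ * A := by
        rw [Matrix.conjTranspose_eq_transpose_of_trivial, hAsymm]
      rw [this]
      exact Matrix.posSemidef_conjTranspose_mul_self A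
    have hQMPPQ : Q * MPP * Q = 1 + A * A := by
      have : Q * MPP * Q = Q⁻¹ * (MXX * MPP) * Q := by
        rw [← hQQ]
        calc Q * MPP * Q = (Q⁻¹ * Q) * Q * MPP * Q := by
              rw [c1, Matrix.one_mul]
          _ = Q⁻¹ * (Q * Q * MPP) * Q := by simp only [Matrix.mul_assoc]
      rw [this, eq2, Matrix.mul_add, Matrix.add_mul, Matrix.mul_one, c1, ← hAA]
    refine ⟨hAsymm, hAA ▸ hAApsd, ?_⟩
    rw [hQMPPQ, add_sub_cancel_left]
    exact hAApsd
  refine ⟨?_, fun Q hQ hQs hQQ => ⟨(main Q hQ hQs hQQ).2.1, (main Q hQ hQs hQQ).2.2⟩⟩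
  -- eigenvalues: conjugate MXP to a symmetric matrix by the square root of MXX
  intro μ hμ
  open scoped MatrixOrder in
  set Q := CFC.sqrt MXX with hQdef
  open scoped MatrixOrder in
  have hQpsd : Q.PosSemidef := (CFC.sqrt_nonneg MXX).posSemidef
  open scoped MatrixOrder in
  have hQQ : Q * Q = MXX := CFC.sqrt_mul_sqrt_self MXX hMXX.posSemidef.nonneg
  have hQsymm : Qᵀ = Q := by
    rw [← Matrix.conjTranspose_eq_transpose_of_trivial]; exact hQpsd.1
  have hQunit : IsUnit Q := by
    rw [Matrix.isUnit_iff_isUnit_det]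
    have : Q.det * Q.det = MXX.det := by rw [← Matrix.det_mul, hQQ]
    have hd : MXX.det ≠ 0 := hMXX.det_pos.ne'
    exact isUnit_iff_ne_zero.2 (fun h0 => hd (by rw [← this, h0, mul_zero]))
  have hQpd : Q.PosDef := posDef_of_posSemidef_isUnit hQpsd hQunit
  obtain ⟨hAsymm, -, -⟩ := main Q hQpd hQsymm hQQ
  set A := Q⁻¹ * MXP * Q with hA
  have hdet : IsUnit Q.det := hQpd.det_pos.ne'.isUnit
  have c1 : Q⁻¹ * Q = 1 := Matrix.nonsing_inv_mul Q hdet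
  have c2 : Q * Q⁻¹ = 1 := Matrix.mul_nonsing_inv Q hdet
  have hconj : MXP = Q * A * Q⁻¹ := by
    rw [hA]
    calc MXP = (Q * Q⁻¹) * MXP * (Q * Q⁻¹) := by
          rw [c2, Matrix.one_mul, Matrix.mul_one]
      _ = Q * (Q⁻¹ * MXP * Q) * Q⁻¹ := by simp only [Matrix.mul_assoc]
  -- map to ℂ
  set f := algebraMap ℝ ℂ with hf
  have hmap : MXP.map f = (Q.map f) * (A.map f) * ((Q⁻¹).map f) := by
    rw [hconj, Matrix.map_mul, Matrix.map_mul]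
  set u : (Matrix (Fin n) (Fin n) ℂ)ˣ :=
    ⟨Q.map f, (Q⁻¹).map f,
      by rw [← Matrix.map_mul, c2, Matrix.map_one f (map_zero f) (map_one f)],
      by rw [← Matrix.map_mul, c1, Matrix.map_one f (map_zero f) (map_one f)]⟩ with hu
  have hspec : spectrum ℂ (MXP.map ⇑f) = spectrum ℂ (A.map ⇑f) := by
    have h2 : MXP.map ⇑f = u.val * (A.map ⇑f) * (u⁻¹).val := hmap
    rw [h2]
    exact spectrum.units_conjugate
  rw [hspec] at hμ
  have hAherm : (A.map f).IsHermitian := by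
    apply Matrix.IsHermitian.map
    · rw [Matrix.IsHermitian, Matrix.conjTranspose_eq_transpose_of_trivial]
      exact hAsymm
    · intro a
      simp [hf, Complex.conj_ofReal]
  have hsym : (Matrix.toEuclideanLin (A.map f)).IsSymmetric :=
    Matrix.isHermitian_iff_isSymmetric.1 hAherm
  rw [← Matrix.spectrum_toEuclideanLin] at hμ
  have heig : Module.End.HasEigenvalue (Matrix.toEuclideanLin (A.map f)) μ :=
    Module.End.hasEigenvalue_iff_mem_spectrum.2 hμ
  have := hsym.conj_eigenvalue_eq_self heig
  have him : (starRingEnd ℂ) μ = μ := this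
  have h3 := congrArg Complex.im him
  simp only [Complex.conj_im] at h3
  linarith
end

section
/- Let M be a symmetric positive definite symplectic 2n×2n matrix and Ω = {z ∈ ℝ²ⁿ : ⟪Mz,z⟫ ≤ 1}. Let Ω_X and Ω_P be the orthogonal projections of Ω onto ℝⁿ_x × 0 and 0 × ℝⁿ_p. Then (Ω_X)° ⊆ Ω_P, i.e., (Ω_X, Ω_P) is a polar dual pair. -/
/-!
Put `q = (0, p)` and `c = ⟪M q, q⟫`. Because `M` is symmetric and symplectic, `M J M = J`,
so `w = J M q` satisfies `⟪M w, w⟫ = c`, while the `x`-part of `w` pairs with `p` to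
`⟪J q, J M q⟫ = c`. The support function of the ellipsoid `{⟪M z, z⟫ ≤ 1}` is `w ↦ √⟪M w, w⟫`,
so `p ∈ (Ω_X)°` gives `c ≤ √c`, that is `c ≤ 1`, and `q` is a point of `Ω` projecting to `p`.
-/

open Matrix

/-- Polar dual of a set in ℝⁿ (with the dot product pairing). -/
def polarDual {n : ℕ} (X : Set (Fin n → ℝ)) : Set (Fin n → ℝ) :=
  {p | ∀ x ∈ X, p ⬝ᵥ x ≤ 1}

namespace Matrix

variable {ι : Type*} [Fintype ι]

lemma smul_mulVec_dotProduct_smul (A : Matrix ι ι ℝ) (t : ℝ) (w : ι → ℝ) :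
    A *ᵥ (t • w) ⬝ᵥ (t • w) = t ^ 2 * (A *ᵥ w ⬝ᵥ w) := by
  rw [mulVec_smul, smul_dotProduct, dotProduct_smul, smul_eq_mul, smul_eq_mul]
  ring

lemma dotProduct_le_sqrt_of_forall_dotProduct_le_one (A : Matrix ι ι ℝ) {v : ι → ℝ}
    (hv : ∀ z, A *ᵥ z ⬝ᵥ z ≤ 1 → v ⬝ᵥ z ≤ 1) (w : ι → ℝ) :
    v ⬝ᵥ w ≤ √(A *ᵥ w ⬝ᵥ w) := by
  set c := A *ᵥ w ⬝ᵥ w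
  rcases le_or_gt c 0 with hc | hc
  · -- the whole ray through `w` lies in the sublevel set
    rw [Real.sqrt_eq_zero'.mpr hc]
    by_contra! hpos
    have h := hv ((2 / (v ⬝ᵥ w)) • w) <| by
      rw [smul_mulVec_dotProduct_smul]
      nlinarith [sq_nonneg (2 / (v ⬝ᵥ w))]
    rw [dotProduct_smul, smul_eq_mul, div_mul_cancel₀ _ hpos.ne'] at h
    norm_num at h
  · have hs : 0 < √c := Real.sqrt_pos.mpr hc
    have h := hv ((√c)⁻¹ • w) <| by
      rw [smul_mulVec_dotProduct_smul, inv_pow, Real.sq_sqrt hc.le, inv_mul_cancel₀ hc.ne']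
    rwa [dotProduct_smul, smul_eq_mul, inv_mul_le_iff₀ hs, mul_one] at h

lemma mulVec_dotProduct_mulVec_of_transpose_mul_self {R : Type*} [CommSemiring R]
    [DecidableEq ι] (A : Matrix ι ι R) (hA : Aᵀ * A = 1) (x y : ι → R) :
    A *ᵥ x ⬝ᵥ A *ᵥ y = x ⬝ᵥ y := by
  rw [dotProduct_mulVec, ← vecMul_transpose, vecMul_vecMul, hA, vecMul_one]

lemma quadForm_mulVec_mulVec_of_mul_mul_eq {R : Type*} [CommSemiring R] [DecidableEq ι]
    {M J : Matrix ι ι R} (hJ : Jᵀ * J = 1) (hMJM : M * J * M = J) (q : ι → R) :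
    M *ᵥ (J *ᵥ M *ᵥ q) ⬝ᵥ J *ᵥ M *ᵥ q = M *ᵥ q ⬝ᵥ q := by
  rw [mulVec_mulVec, mulVec_mulVec, hMJM,
    mulVec_dotProduct_mulVec_of_transpose_mul_self J hJ, dotProduct_comm]

end Matrix

lemma transpose_mul_self_fromBlocks_zero_one_neg_one_zero (n R : Type*) [Fintype n]
    [DecidableEq n] [Ring R] :
    (fromBlocks 0 1 (-1) 0 : Matrix (n ⊕ n) (n ⊕ n) R)ᵀ * fromBlocks 0 1 (-1) 0 = 1 := by
  simp [fromBlocks_transpose, fromBlocks_multiply, ← fromBlocks_one]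

lemma fromBlocks_zero_one_neg_one_zero_mulVec_sumElim_zero {n R : Type*} [Fintype n]
    [DecidableEq n] [Ring R] (p : n → R) :
    (fromBlocks 0 1 (-1) 0 : Matrix (n ⊕ n) (n ⊕ n) R) *ᵥ Sum.elim 0 p = Sum.elim p 0 := by
  ext (i | i) <;> simp [fromBlocks_mulVec]

lemma sumElim_zero_dotProduct {m R : Type*} [Fintype m] [Semiring R] (p : m → R)
    (z : m ⊕ m → R) :
    Sum.elim p 0 ⬝ᵥ z = p ⬝ᵥ (z ∘ Sum.inl) := by
  simp [dotProduct, Fintype.sum_sum_type]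

/-- let `M` be a symmetric positive definite symplectic matrix
and `Ω = {z : ⟪Mz,z⟫ ≤ 1}`.  Then the orthogonal projections `Ω_X` and `Ω_P`
of `Ω` on the coordinate Lagrangian planes form a polar dual pair:
`(Ω_X)° ⊆ Ω_P`. -/
theorem projections_of_symplectic_ellipsoid_dual_pair {n : ℕ}
    (M : Matrix (Fin n ⊕ Fin n) (Fin n ⊕ Fin n) ℝ)
    (hM : M.PosDef)
    (hsympl : Mᵀ * (Matrix.fromBlocks 0 1 (-1) 0) * M
        = Matrix.fromBlocks 0 1 (-1) 0) :
    polarDual ((fun z : (Fin n ⊕ Fin n) → ℝ => z ∘ Sum.inl) ''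
        {z | M.mulVec z ⬝ᵥ z ≤ 1})
      ⊆ (fun z : (Fin n ⊕ Fin n) → ℝ => z ∘ Sum.inr) ''
        {z | M.mulVec z ⬝ᵥ z ≤ 1} := by
  intro p hp
  set J : Matrix (Fin n ⊕ Fin n) (Fin n ⊕ Fin n) ℝ := fromBlocks 0 1 (-1) 0
  have hJ : Jᵀ * J = 1 := transpose_mul_self_fromBlocks_zero_one_neg_one_zero (Fin n) ℝ
  have hMt : Mᵀ = M := hM.isHermitian.eq
  have hMJM : M * J * M = J := by rwa [hMt] at hsympl
  set q : Fin n ⊕ Fin n → ℝ := Sum.elim 0 p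
  refine ⟨q, ?_, rfl⟩
  have hpolar : ∀ z, M *ᵥ z ⬝ᵥ z ≤ 1 → J *ᵥ q ⬝ᵥ z ≤ 1 := fun z hz => by
    rw [fromBlocks_zero_one_neg_one_zero_mulVec_sumElim_zero, sumElim_zero_dotProduct]
    exact hp _ ⟨z, hz, rfl⟩
  have hc : M *ᵥ q ⬝ᵥ q ≤ √(M *ᵥ q ⬝ᵥ q) := by
    simpa only [quadForm_mulVec_mulVec_of_mul_mul_eq hJ hMJM,
      mulVec_dotProduct_mulVec_of_transpose_mul_self J hJ, dotProduct_comm q] using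
      dotProduct_le_sqrt_of_forall_dotProduct_le_one M hpolar (J *ᵥ M *ᵥ q)
  exact not_lt.mp fun h => (Real.sqrt_lt_self_iff.mpr h).not_ge hc
end

section
/- Let Ω ⊆ ℝ²ⁿ be a centrally symmetric convex body containing S(B²ⁿ(1)) for some S ∈ Sp(n). Then the orthogonal projections Π_X Ω ⊆ ℝⁿ_x and Π_P Ω ⊆ ℝⁿ_p satisfy (Π_X Ω)° ⊆ Π_P Ω. -/
open Matrix

/-- The standard symplectic form on ℝⁿ × ℝⁿ. -/
def symplForm {n : ℕ} (z z' : (Fin n → ℝ) × (Fin n → ℝ)) : ℝ :=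
  z'.2 ⬝ᵥ z.1 - z.2 ⬝ᵥ z'.1

lemma dot_self_nonneg' {n : ℕ} (v : Fin n → ℝ) : 0 ≤ v ⬝ᵥ v :=
  Finset.sum_nonneg fun i _ => mul_self_nonneg (v i)

/-- if a centrally symmetric convex body `Ω ⊆ ℝ²ⁿ` contains a
symplectic ball `S(B²ⁿ(1))`, then its orthogonal projections on the two
coordinate Lagrangian planes form a polar dual pair: `(Π_X Ω)° ⊆ Π_P Ω`. -/
theorem projections_of_body_containing_symplectic_ball {n : ℕ}
    (Ω : Set ((Fin n → ℝ) × (Fin n → ℝ)))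
    (hc : IsCompact Ω) (hconv : Convex ℝ Ω) (hsymm : Ω = -Ω)
    (hint : (interior Ω).Nonempty)
    (S : ((Fin n → ℝ) × (Fin n → ℝ)) ≃ₗ[ℝ] ((Fin n → ℝ) × (Fin n → ℝ)))
    (hS : ∀ z z', symplForm (S z) (S z') = symplForm z z')
    (hincl : S '' {z : (Fin n → ℝ) × (Fin n → ℝ) | z.1 ⬝ᵥ z.1 + z.2 ⬝ᵥ z.2 ≤ 1} ⊆ Ω) :
    polarDual (Prod.fst '' Ω) ⊆ Prod.snd '' Ω := by
  intro p hp
  set z₀ : (Fin n → ℝ) × (Fin n → ℝ) := S.symm (0, p) with hz₀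
  have hSz₀ : S z₀ = (0, p) := S.apply_symm_apply _
  set N : ℝ := z₀.1 ⬝ᵥ z₀.1 + z₀.2 ⬝ᵥ z₀.2 with hN
  have hN0 : 0 ≤ N := add_nonneg (dot_self_nonneg' _) (dot_self_nonneg' _)
  have key : N ≤ 1 := by
    rcases eq_or_lt_of_le hN0 with h0 | hpos
    · linarith
    · have hsN : 0 < Real.sqrt N := Real.sqrt_pos.2 hpos
      set t : ℝ := (Real.sqrt N)⁻¹ with ht
      have hNs : Real.sqrt N * Real.sqrt N = N := Real.mul_self_sqrt hN0
      set z : (Fin n → ℝ) × (Fin n → ℝ) := (t • z₀.2, -(t • z₀.1)) with hz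
      have hzball : z.1 ⬝ᵥ z.1 + z.2 ⬝ᵥ z.2 ≤ 1 := by
        have h1 : z.1 ⬝ᵥ z.1 + z.2 ⬝ᵥ z.2 = t * t * N := by
          simp only [hz, smul_dotProduct, dotProduct_smul, neg_dotProduct,
            dotProduct_neg, neg_neg, smul_eq_mul, hN]
          ring
        rw [h1]
        have : t * t * N = 1 := by
          rw [ht]; field_simp; rw [Real.sq_sqrt hN0]
        linarith
      have hSzΩ : S z ∈ Ω := hincl ⟨z, hzball, rfl⟩
      have hple : p ⬝ᵥ (S z).1 ≤ 1 := hp _ ⟨S z, hSzΩ, rfl⟩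
      have hform : p ⬝ᵥ (S z).1 = Real.sqrt N := by
        have h2 : symplForm (S z) (S z₀) = p ⬝ᵥ (S z).1 := by
          rw [hSz₀]; simp [symplForm]
        have h3 : symplForm z z₀ = t * N := by
          simp only [symplForm, hz, smul_dotProduct, dotProduct_smul, neg_dotProduct,
            dotProduct_neg, neg_neg, smul_eq_mul, hN]
          ring
        have := hS z z₀
        rw [h2, h3] at this
        rw [this, ht]
        field_simp
        rw [Real.sq_sqrt hN0]
      rw [hform] at hple
      calc N = Real.sqrt N * Real.sqrt N := hNs.symm
        _ ≤ 1 * 1 := by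
            apply mul_le_mul hple hple (le_of_lt hsN) zero_le_one
        _ = 1 := one_mul 1
  have : S z₀ ∈ Ω := hincl ⟨z₀, key, rfl⟩
  exact ⟨S z₀, this, by rw [hSz₀]⟩
end

section
/- Let A be a positive definite symmetric n×n matrix, X = {x : ⟪Ax,x⟫ ≤ 1} and X° = {p : ⟪A⁻¹p,p⟫ ≤ 1}. Suppose M is a symmetric positive definite symplectic 2n×2n matrix such that the ellipsoid Ω = {z : ⟪Mz,z⟫ ≤ 1} has orthogonal projections Π_X Ω = X and Π_P Ω = X°. Then M is the block diagonal matrix [[A, 0],[0, A⁻¹]], so Ω = {(x,p) : ⟪Ax,x⟫ + ⟪A⁻¹p,p⟫ ≤ 1} is unique. -/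
open Matrix

lemma dot_symm {n : ℕ} {B : Matrix (Fin n) (Fin n) ℝ} (hB : Bᵀ = B) (x y : Fin n → ℝ) :
    B *ᵥ y ⬝ᵥ x = B *ᵥ x ⬝ᵥ y := by
  rw [dotProduct_comm, dotProduct_mulVec, ← mulVec_transpose, hB]

lemma quadSetEq {n : ℕ} {B C : Matrix (Fin n) (Fin n) ℝ} (hB : Bᵀ = B) (hC : Cᵀ = C)
    (hCpd : C.PosDef)
    (h : {x : Fin n → ℝ | B.mulVec x ⬝ᵥ x ≤ 1} = {x : Fin n → ℝ | C.mulVec x ⬝ᵥ x ≤ 1}) :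
    B = C := by
  have hiff : ∀ x : Fin n → ℝ, B *ᵥ x ⬝ᵥ x ≤ 1 ↔ C *ᵥ x ⬝ᵥ x ≤ 1 := fun x =>
    Set.ext_iff.mp h x
  have hscale : ∀ (D : Matrix (Fin n) (Fin n) ℝ) (t : ℝ) (x : Fin n → ℝ),
      D *ᵥ (t • x) ⬝ᵥ (t • x) = t ^ 2 * (D *ᵥ x ⬝ᵥ x) := by
    intro D t x
    rw [mulVec_smul, smul_dotProduct, dotProduct_smul]
    simp [smul_smul]
    ring
  have hq : ∀ x : Fin n → ℝ, B *ᵥ x ⬝ᵥ x = C *ᵥ x ⬝ᵥ x := by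
    intro x
    by_cases hx : x = 0
    · simp [hx]
    · have hc : 0 < C *ᵥ x ⬝ᵥ x := by
        have := hCpd.dotProduct_mulVec_pos hx
        rwa [star_trivial, dotProduct_comm] at this
      set b := B *ᵥ x ⬝ᵥ x with hbdef
      set c := C *ᵥ x ⬝ᵥ x with hcdef
      have hiff2 : ∀ t : ℝ, t ^ 2 * b ≤ 1 ↔ t ^ 2 * c ≤ 1 := by
        intro t
        have := hiff (t • x)
        rwa [hscale, hscale] at this
      have hb : 0 < b := by
        by_contra hb
        push_neg at hb
        have h2 := (hiff2 (Real.sqrt (2 / c))).mp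
        rw [Real.sq_sqrt (by positivity)] at h2
        have : (2 / c) * c = 2 := div_mul_cancel₀ 2 hc.ne'
        have := h2 (le_trans (mul_nonpos_of_nonneg_of_nonpos (by positivity) hb) zero_le_one)
        rw [‹(2/c)*c = 2›] at this
        linarith
      have h1 : b ≤ c := by
        have := (hiff2 (Real.sqrt c⁻¹)).mpr
        rw [Real.sq_sqrt (by positivity), inv_mul_cancel₀ hc.ne'] at this
        have := this le_rfl
        rw [inv_mul_le_iff₀ hc] at this
        linarith
      have h2 : c ≤ b := by
        have := (hiff2 (Real.sqrt b⁻¹)).mp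
        rw [Real.sq_sqrt (by positivity), inv_mul_cancel₀ hb.ne'] at this
        have := this le_rfl
        rw [inv_mul_le_iff₀ hb] at this
        linarith
      linarith
  have hbil : ∀ x y : Fin n → ℝ, B *ᵥ x ⬝ᵥ y = C *ᵥ x ⬝ᵥ y := by
    intro x y
    have hxy := hq (x + y)
    simp only [mulVec_add, add_dotProduct, dotProduct_add] at hxy
    rw [dot_symm hB x y, dot_symm hC x y] at hxy
    have := hq x
    have := hq y
    linarith
  ext i j
  have := hbil (Pi.single j 1) (Pi.single i 1)
  simpa [mulVec_single, dotProduct_single] using this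


lemma proj_inl {n : ℕ} (MXX MXP MPP : Matrix (Fin n) (Fin n) ℝ)
    (hPP : MPP.PosDef) :
    (fun z : (Fin n ⊕ Fin n) → ℝ => z ∘ Sum.inl) ''
      {z | (Matrix.fromBlocks MXX MXP MXPᵀ MPP).mulVec z ⬝ᵥ z ≤ 1}
    = {x : Fin n → ℝ | (MXX - MXP * MPP⁻¹ * MXPᵀ) *ᵥ x ⬝ᵥ x ≤ 1} := by
  haveI := MPP.invertibleOfIsUnitDet (isUnit_iff_ne_zero.2 hPP.det_pos.ne')
  have hct : MXPᴴ = MXPᵀ := conjTranspose_eq_transpose_of_trivial _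
  have key : ∀ x y : Fin n → ℝ,
      (Matrix.fromBlocks MXX MXP MXPᵀ MPP) *ᵥ (Sum.elim x y) ⬝ᵥ (Sum.elim x y)
      = MPP *ᵥ ((MPP⁻¹ * MXPᵀ) *ᵥ x + y) ⬝ᵥ ((MPP⁻¹ * MXPᵀ) *ᵥ x + y)
        + (MXX - MXP * MPP⁻¹ * MXPᵀ) *ᵥ x ⬝ᵥ x := by
    intro x y
    have := Matrix.schur_complement_eq₂₂ (α := ℝ) MXX MXP x y hPP.1
    rw [hct] at this
    rw [dotProduct_comm, dotProduct_mulVec]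
    rw [star_trivial] at this
    rw [this, star_trivial, star_trivial]
    congr 1
    · rw [← dotProduct_mulVec, dotProduct_comm]
    · rw [← dotProduct_mulVec, dotProduct_comm]
  ext x
  constructor
  · rintro ⟨z, hz, rfl⟩
    have hz' := Sum.elim_comp_inl_inr z
    rw [Set.mem_setOf_eq, ← hz', key] at hz
    have hnn : 0 ≤ MPP *ᵥ ((MPP⁻¹ * MXPᵀ) *ᵥ (z ∘ Sum.inl) + z ∘ Sum.inr) ⬝ᵥ
        ((MPP⁻¹ * MXPᵀ) *ᵥ (z ∘ Sum.inl) + z ∘ Sum.inr) := by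
      have := hPP.posSemidef.dotProduct_mulVec_nonneg ((MPP⁻¹ * MXPᵀ) *ᵥ (z ∘ Sum.inl) + z ∘ Sum.inr)
      rwa [star_trivial, dotProduct_comm] at this
    exact Set.mem_setOf_eq ▸ by linarith
  · intro hx
    refine ⟨Sum.elim x (-((MPP⁻¹ * MXPᵀ) *ᵥ x)), ?_, ?_⟩
    · rw [Set.mem_setOf_eq, key]
      simp only [add_neg_cancel, mulVec_zero, zero_dotProduct, zero_add]
      exact hx
    · exact Sum.elim_comp_inl x _

lemma proj_inr {n : ℕ} (MXX MXP MPP : Matrix (Fin n) (Fin n) ℝ)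
    (hXX : MXX.PosDef) :
    (fun z : (Fin n ⊕ Fin n) → ℝ => z ∘ Sum.inr) ''
      {z | (Matrix.fromBlocks MXX MXP MXPᵀ MPP).mulVec z ⬝ᵥ z ≤ 1}
    = {y : Fin n → ℝ | (MPP - MXPᵀ * MXX⁻¹ * MXP) *ᵥ y ⬝ᵥ y ≤ 1} := by
  haveI := MXX.invertibleOfIsUnitDet (isUnit_iff_ne_zero.2 hXX.det_pos.ne')
  have hct : MXPᴴ = MXPᵀ := conjTranspose_eq_transpose_of_trivial _
  have key : ∀ x y : Fin n → ℝ,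
      (Matrix.fromBlocks MXX MXP MXPᵀ MPP) *ᵥ (Sum.elim x y) ⬝ᵥ (Sum.elim x y)
      = MXX *ᵥ (x + (MXX⁻¹ * MXP) *ᵥ y) ⬝ᵥ (x + (MXX⁻¹ * MXP) *ᵥ y)
        + (MPP - MXPᵀ * MXX⁻¹ * MXP) *ᵥ y ⬝ᵥ y := by
    intro x y
    have := Matrix.schur_complement_eq₁₁ (α := ℝ) (A := MXX) MXP MPP x y hXX.1
    rw [hct] at this
    rw [dotProduct_comm, dotProduct_mulVec]
    rw [star_trivial] at this
    rw [this, star_trivial, star_trivial]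
    congr 1
    · rw [← dotProduct_mulVec, dotProduct_comm]
    · rw [← dotProduct_mulVec, dotProduct_comm]
  ext y
  constructor
  · rintro ⟨z, hz, rfl⟩
    have hz' := Sum.elim_comp_inl_inr z
    rw [Set.mem_setOf_eq, ← hz', key] at hz
    have hnn : 0 ≤ MXX *ᵥ (z ∘ Sum.inl + (MXX⁻¹ * MXP) *ᵥ (z ∘ Sum.inr)) ⬝ᵥ
        (z ∘ Sum.inl + (MXX⁻¹ * MXP) *ᵥ (z ∘ Sum.inr)) := by
      have := hXX.posSemidef.dotProduct_mulVec_nonneg (z ∘ Sum.inl + (MXX⁻¹ * MXP) *ᵥ (z ∘ Sum.inr))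
      rwa [star_trivial, dotProduct_comm] at this
    exact Set.mem_setOf_eq ▸ by linarith
  · intro hy
    refine ⟨Sum.elim (-((MXX⁻¹ * MXP) *ᵥ y)) y, ?_, ?_⟩
    · rw [Set.mem_setOf_eq, key]
      simp only [neg_add_cancel, mulVec_zero, zero_dotProduct, zero_add]
      exact hy
    · exact Sum.elim_comp_inr _ y


/-- uniqueness of the symplectic ball with prescribed projections.
If `A > 0`, `X = {x : ⟪Ax,x⟫ ≤ 1}`, `X° = {p : ⟪A⁻¹p,p⟫ ≤ 1}`, and `M` is a
symmetric positive definite symplectic matrix whose ellipsoid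
`Ω = {z : ⟪Mz,z⟫ ≤ 1}` has orthogonal projections `X` and `X°` on the two
coordinate Lagrangian planes, then `M = [[A,0],[0,A⁻¹]]`. -/
theorem symplectic_ball_with_given_projections_unique {n : ℕ}
    (A : Matrix (Fin n) (Fin n) ℝ) (hA : A.PosDef) (hAsymm : Aᵀ = A)
    (MXX MXP MPX MPP : Matrix (Fin n) (Fin n) ℝ)
    (hM : (Matrix.fromBlocks MXX MXP MPX MPP).PosDef)
    (hMPX : MPX = MXPᵀ)
    (hsympl : (Matrix.fromBlocks MXX MXP MPX MPP)ᵀ *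
        (Matrix.fromBlocks 0 1 (-1) 0) * (Matrix.fromBlocks MXX MXP MPX MPP)
        = Matrix.fromBlocks 0 1 (-1) 0)
    (hprojX : (fun z : (Fin n ⊕ Fin n) → ℝ => z ∘ Sum.inl) ''
        {z | (Matrix.fromBlocks MXX MXP MPX MPP).mulVec z ⬝ᵥ z ≤ 1}
        = {x : Fin n → ℝ | A.mulVec x ⬝ᵥ x ≤ 1})
    (hprojP : (fun z : (Fin n ⊕ Fin n) → ℝ => z ∘ Sum.inr) ''
        {z | (Matrix.fromBlocks MXX MXP MPX MPP).mulVec z ⬝ᵥ z ≤ 1}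
        = {p : Fin n → ℝ | A⁻¹.mulVec p ⬝ᵥ p ≤ 1}) :
    Matrix.fromBlocks MXX MXP MPX MPP = Matrix.fromBlocks A 0 0 A⁻¹ := by
  subst hMPX
  -- symmetry of the blocks
  have hMt : (Matrix.fromBlocks MXX MXP MXPᵀ MPP)ᵀ = Matrix.fromBlocks MXX MXP MXPᵀ MPP := by
    rw [← conjTranspose_eq_transpose_of_trivial]; exact hM.1
  have hb := hMt
  rw [fromBlocks_transpose] at hb
  have hXXs : MXXᵀ = MXX := congrArg Matrix.toBlocks₁₁ hb
  have hPPs : MPPᵀ = MPP := congrArg Matrix.toBlocks₂₂ hb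
  -- positive definiteness of the diagonal blocks
  have hMXXpd : MXX.PosDef := by
    refine posDef_iff_dotProduct_mulVec.mpr ⟨?_, ?_⟩
    · show MXXᴴ = MXX
      rw [conjTranspose_eq_transpose_of_trivial]; exact hXXs
    · intro x hx
      have hz : Sum.elim x (0 : Fin n → ℝ) ≠ 0 := by
        intro hcon; apply hx; funext i
        simpa using congrFun hcon (Sum.inl i)
      have := hM.dotProduct_mulVec_pos hz
      rw [star_trivial] at this
      simpa [fromBlocks_mulVec, sumElim_dotProduct_sumElim] using this
  have hMPPpd : MPP.PosDef := by
    refine posDef_iff_dotProduct_mulVec.mpr ⟨?_, ?_⟩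
    · show MPPᴴ = MPP
      rw [conjTranspose_eq_transpose_of_trivial]; exact hPPs
    · intro x hx
      have hz : Sum.elim (0 : Fin n → ℝ) x ≠ 0 := by
        intro hcon; apply hx; funext i
        simpa using congrFun hcon (Sum.inr i)
      have := hM.dotProduct_mulVec_pos hz
      rw [star_trivial] at this
      simpa [fromBlocks_mulVec, sumElim_dotProduct_sumElim] using this
  have huXX : IsUnit MXX.det := isUnit_iff_ne_zero.2 hMXXpd.det_pos.ne'
  have huPP : IsUnit MPP.det := isUnit_iff_ne_zero.2 hMPPpd.det_pos.ne'
  have huA : IsUnit A.det := isUnit_iff_ne_zero.2 hA.det_pos.ne'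
  -- symplectic block relations
  rw [hMt, fromBlocks_multiply, fromBlocks_multiply] at hsympl
  have r11 := congrArg Matrix.toBlocks₁₁ hsympl
  have r12 := congrArg Matrix.toBlocks₁₂ hsympl
  have r21 := congrArg Matrix.toBlocks₂₁ hsympl
  have r22 := congrArg Matrix.toBlocks₂₂ hsympl
  simp only [Matrix.toBlocks_fromBlocks₁₁, Matrix.toBlocks_fromBlocks₁₂,
    Matrix.toBlocks_fromBlocks₂₁, Matrix.toBlocks_fromBlocks₂₂,
    Matrix.mul_zero, Matrix.mul_one, Matrix.zero_mul, Matrix.one_mul,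
    Matrix.mul_neg, Matrix.neg_mul, zero_add, add_zero] at r11 r12 r21 r22
  -- clean block relations
  have e11 : MXP * MXX = MXX * MXPᵀ := by
    have h : MXP * MXX = -(-(MXP * MXX) + MXX * MXPᵀ) + MXX * MXPᵀ := by abel
    rw [r11] at h; simpa using h
  have e12 : MXX * MPP = 1 + MXP * MXP := by
    have h : MXX * MPP = (-(MXP * MXP) + MXX * MPP) + MXP * MXP := by abel
    rw [r12] at h; exact h
  have e21 : MPP * MXX = 1 + MXPᵀ * MXPᵀ := by
    have h : MPP * MXX = -(-(MPP * MXX) + MXPᵀ * MXPᵀ) + (1 + MXPᵀ * MXPᵀ) - 1 := by abel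
    rw [r21] at h
    rw [h]; abel
  have e22 : MPP * MXP = MXPᵀ * MPP := by
    have h : MPP * MXP = -(-(MPP * MXP) + MXPᵀ * MPP) + MXPᵀ * MPP := by abel
    rw [r22] at h; simpa using h
  -- Schur complement identities forced by symplecticity
  have hcommX : MXPᵀ * MXX⁻¹ = MXX⁻¹ * MXP := by
    have hMXPt : MXPᵀ = MXX⁻¹ * (MXP * MXX) := by
      rw [e11, nonsing_inv_mul_cancel_left _ _ huXX]
    rw [hMXPt, Matrix.mul_assoc, mul_nonsing_inv_cancel_right _ _ huXX]
  have hS2 : MPP - MXPᵀ * MXX⁻¹ * MXP = MXX⁻¹ := by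
    have hMPPe : MPP = MXX⁻¹ * (1 + MXP * MXP) := by
      rw [← e12, nonsing_inv_mul_cancel_left _ _ huXX]
    rw [hMPPe, hcommX, Matrix.mul_add, Matrix.mul_one, ← Matrix.mul_assoc]
    abel
  have hcommP : MXP * MPP⁻¹ = MPP⁻¹ * MXPᵀ := by
    have hMXPe : MXP = MPP⁻¹ * (MXPᵀ * MPP) := by
      rw [← e22, nonsing_inv_mul_cancel_left _ _ huPP]
    nth_rewrite 1 [hMXPe]
    rw [Matrix.mul_assoc, mul_nonsing_inv_cancel_right _ _ huPP]
  have hS1 : MXX - MXP * MPP⁻¹ * MXPᵀ = MPP⁻¹ := by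
    have hMXXe : MXX = MPP⁻¹ * (1 + MXPᵀ * MXPᵀ) := by
      rw [← e21, nonsing_inv_mul_cancel_left _ _ huPP]
    rw [hMXXe, hcommP, Matrix.mul_add, Matrix.mul_one, ← Matrix.mul_assoc]
    abel
  -- identify the blocks from the projection data
  rw [proj_inl MXX MXP MPP hMPPpd, hS1] at hprojX
  rw [proj_inr MXX MXP MPP hMXXpd, hS2] at hprojP
  have hPinvsymm : (MPP⁻¹)ᵀ = MPP⁻¹ := by rw [transpose_nonsing_inv, hPPs]
  have hXinvsymm : (MXX⁻¹)ᵀ = MXX⁻¹ := by rw [transpose_nonsing_inv, hXXs]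
  have hAinvsymm : (A⁻¹)ᵀ = A⁻¹ := by rw [transpose_nonsing_inv, hAsymm]
  have hPA : MPP⁻¹ = A := quadSetEq hPinvsymm hAsymm hA hprojX
  have hXA : MXX⁻¹ = A⁻¹ := quadSetEq hXinvsymm hAinvsymm hA.inv hprojP
  have hMXXA : MXX = A := by
    have h : MXX⁻¹⁻¹ = A⁻¹⁻¹ := congrArg (fun B : Matrix (Fin n) (Fin n) ℝ => B⁻¹) hXA
    rwa [Matrix.nonsing_inv_nonsing_inv _ huXX, Matrix.nonsing_inv_nonsing_inv _ huA] at h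
  have hMPPA : MPP = A⁻¹ := by
    have h : MPP⁻¹⁻¹ = A⁻¹ := congrArg (fun B : Matrix (Fin n) (Fin n) ℝ => B⁻¹) hPA
    rwa [Matrix.nonsing_inv_nonsing_inv _ huPP] at h
  -- the off-diagonal block vanishes
  have hXPsq : MXP * MXP = 0 := by
    have h := e12
    rw [hMXXA, hMPPA, mul_nonsing_inv _ huA] at h
    rwa [left_eq_add] at h
  have hAcomm : A * MXPᵀ = MXP * A := by rw [← hMXXA]; exact e11.symm
  have hz0 : MXP * A * MXPᵀ = 0 := by
    rw [Matrix.mul_assoc, hAcomm, ← Matrix.mul_assoc, hXPsq, Matrix.zero_mul]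
  have hv : ∀ x : Fin n → ℝ, MXPᵀ *ᵥ x = 0 := by
    intro x
    by_contra hne
    have hpos := hA.dotProduct_mulVec_pos hne
    rw [star_trivial] at hpos
    have hzero : (MXPᵀ *ᵥ x) ⬝ᵥ (A *ᵥ (MXPᵀ *ᵥ x)) = 0 := by
      rw [mulVec_mulVec, dotProduct_mulVec, mulVec_transpose, vecMul_vecMul,
        ← Matrix.mul_assoc, hz0, vecMul_zero, zero_dotProduct]
    rw [hzero] at hpos
    exact lt_irrefl 0 hpos
  have hT0 : MXPᵀ = 0 := by
    ext i j
    simpa using congrFun (hv (Pi.single j 1)) i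
  have hXP0 : MXP = 0 := by
    rw [← transpose_transpose MXP, hT0, transpose_zero]
  rw [hMXXA, hMPPA, hXP0, transpose_zero]
end

section
/- Let Σ_XX and Σ_PP be positive definite symmetric n×n matrices with Σ_XX Σ_PP = (1/4)I. Then the block diagonal matrix Σ = [[Σ_XX, 0],[0, Σ_PP]] satisfies Σ + (i/2)J ≥ 0, where J = [[0,I],[-I,0]]. -/
open Matrix
open scoped ComplexOrder

/-- if `Σ_XX Σ_PP = (1/4)I` for positive definite symmetric
`Σ_XX`, `Σ_PP`, then the block diagonal matrix `Σ = [[Σ_XX,0],[0,Σ_PP]]`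
satisfies the quantum condition `Σ + (i/2)J ≥ 0`. -/
theorem quantum_condition_of_exact_dual_covariances {n : ℕ}
    (SXX SPP : Matrix (Fin n) (Fin n) ℝ)
    (hXX : SXX.PosDef) (hXXsymm : SXXᵀ = SXX)
    (hPP : SPP.PosDef) (hPPsymm : SPPᵀ = SPP)
    (hprod : SXX * SPP = (1 / 4 : ℝ) • 1) :
    ((Matrix.fromBlocks SXX 0 0 SPP).map (algebraMap ℝ ℂ)
        + (Complex.I / 2) •
          (Matrix.fromBlocks 0 1 (-1) 0 :
            Matrix (Fin n ⊕ Fin n) (Fin n ⊕ Fin n) ℂ)).PosSemidef := by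
  set φ := algebraMap ℝ ℂ with hφ
  open scoped MatrixOrder in
  set T0 := CFC.sqrt SXX with hT0def
  open scoped MatrixOrder in
  have hT0 : T0 * T0 = SXX := CFC.sqrt_mul_sqrt_self SXX hXX.posSemidef.nonneg
  open scoped MatrixOrder in
  have hT0h : T0ᴴ = T0 := (CFC.sqrt_nonneg SXX).posSemidef.1
  have hT0sym : ∀ i j, T0 j i = T0 i j := fun i j => by
    have := congrFun (congrFun hT0h i) j
    simpa [conjTranspose_apply] using this
  set T : Matrix (Fin n) (Fin n) ℂ := T0.map φ with hTdef
  have hTT : T * T = SXX.map φ := by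
    rw [hTdef, ← Matrix.map_mul, hT0]
  have hTh : Tᴴ = T := by
    ext i j
    simp only [conjTranspose_apply, hTdef, Matrix.map_apply]
    rw [hT0sym i j]
    simp [hφ, Complex.conj_ofReal]
  -- determinant of T is a unit
  have hdetS : (SXX.map φ).det = φ SXX.det := by
    rw [← RingHom.mapMatrix_apply, ← RingHom.map_det]
  have hdetT : IsUnit T.det := by
    have h2 : T.det * T.det = φ SXX.det := by
      rw [← hdetS, ← hTT, det_mul]
    have hne : φ SXX.det ≠ 0 := by
      simp only [hφ, Complex.coe_algebraMap, Complex.ofReal_ne_zero]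
      exact hXX.det_pos.ne'
    have : T.det ≠ 0 := by
      intro h
      rw [h, mul_zero] at h2
      exact hne h2.symm
    exact this.isUnit
  have hTinv : T * T⁻¹ = 1 := mul_nonsing_inv T hdetT
  have hinvT : T⁻¹ * T = 1 := nonsing_inv_mul T hdetT
  have hTinvh : T⁻¹ᴴ = T⁻¹ := by rw [conjTranspose_nonsing_inv, hTh]
  -- the mapped product relation
  have hmapprod : SXX.map φ * SPP.map φ = ((1:ℂ) / 4) • 1 := by
    rw [← Matrix.map_mul, hprod]
    ext i j
    simp [Matrix.map_apply, Matrix.smul_apply, Matrix.one_apply, hφ]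
    split <;> simp
  -- SPP.map φ = (1/4) • (T⁻¹ * T⁻¹)
  have hSPP : SPP.map φ = ((1:ℂ) / 4) • (T⁻¹ * T⁻¹) := by
    have h1 : T * (T * SPP.map φ) = ((1:ℂ) / 4) • 1 := by
      rw [← mul_assoc, hTT, hmapprod]
    have h2 := congrArg (fun M => T⁻¹ * (T⁻¹ * M)) h1
    simpa [← mul_assoc, hinvT, Matrix.mul_smul] using h2
  -- star of I/2
  have hstar : star (Complex.I / 2) = -Complex.I / 2 := by
    simp [Complex.ext_iff]
  -- the factorization
  set D : Matrix (Fin n ⊕ Fin n) (Fin n ⊕ Fin n) ℂ :=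
    fromBlocks T ((Complex.I / 2) • T⁻¹) 0 0 with hDdef
  have hDh : Dᴴ = fromBlocks T 0 ((-Complex.I / 2) • T⁻¹) 0 := by
    rw [hDdef, fromBlocks_conjTranspose, hTh, conjTranspose_smul, hTinvh,
      conjTranspose_zero, hstar]
  have key : ((Matrix.fromBlocks SXX 0 0 SPP).map φ
        + (Complex.I / 2) •
          (Matrix.fromBlocks 0 1 (-1) 0 :
            Matrix (Fin n ⊕ Fin n) (Fin n ⊕ Fin n) ℂ)) = Dᴴ * D := by
    rw [hDh, hDdef, fromBlocks_multiply, fromBlocks_map, fromBlocks_smul,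
      fromBlocks_add, fromBlocks_inj]
    refine ⟨?_, ?_, ?_, ?_⟩
    · simp [hTT]
    · simp [Matrix.mul_smul, hTinv]
    · simp [Matrix.smul_mul, hinvT, neg_div, neg_smul]
    · have hsc : (-Complex.I / 2) * (Complex.I / 2) = (1:ℂ) / 4 := by
        rw [div_mul_div_comm, neg_mul, Complex.I_mul_I]
        norm_num
      rw [Matrix.smul_mul, Matrix.mul_smul, smul_smul, hsc]
      simp [hSPP]
  rw [key]
  exact posSemidef_conjTranspose_mul_self D
end

section
/- Let A and B be real positive definite symmetric n×n matrices. Then there exists L ∈ GL(n,ℝ) such that LᵀAL = Λ and L⁻¹B(Lᵀ)⁻¹ = Λ, where Λ = diag(√λ₁,...,√λₙ) and λ₁,...,λₙ are the (positive real) eigenvalues of AB. -/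
open Matrix Polynomial
open scoped MatrixOrder

lemma my_charpoly_conj {n : ℕ} (P N : Matrix (Fin n) (Fin n) ℝ) (hP : IsUnit P.det) :
    (P * N * P⁻¹).charpoly = N.charpoly := by
  have hPP : P * P⁻¹ = 1 := mul_nonsing_inv P hP
  have key : charmatrix (P * N * P⁻¹) =
      (P.map C) * charmatrix N * ((P⁻¹).map C) := by
    simp only [charmatrix, RingHom.mapMatrix_apply, mul_sub, sub_mul, Matrix.map_mul]
    congr 1
    · rw [← (Matrix.scalar_commute X (Commute.all X) (P.map C)).eq, mul_assoc,
        ← Matrix.map_mul, hPP]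
      simp
  have hdet : (P.map (C : ℝ →+* ℝ[X])).det * ((P⁻¹).map (C : ℝ →+* ℝ[X])).det = 1 := by
    have h1 : (P.map (C : ℝ →+* ℝ[X])).det = C P.det := ((C : ℝ →+* ℝ[X]).map_det P).symm
    have h2 : ((P⁻¹).map (C : ℝ →+* ℝ[X])).det = C (P⁻¹).det :=
      ((C : ℝ →+* ℝ[X]).map_det P⁻¹).symm
    rw [h1, h2, ← _root_.map_mul, ← det_mul, hPP, det_one, _root_.map_one]
  rw [Matrix.charpoly, key, det_mul, det_mul, Matrix.charpoly, mul_comm, ← mul_assoc,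
    mul_comm (((P⁻¹).map (C : ℝ →+* ℝ[X])).det), hdet, one_mul]

lemma my_charpoly_diag {n : ℕ} (d : Fin n → ℝ) :
    (diagonal d).charpoly = ∏ i : Fin n, (X - C (d i)) := by
  rw [charpoly_of_upperTriangular _ (blockTriangular_diagonal d)]
  simp

lemma my_posdef_conj {n : ℕ} {B P : Matrix (Fin n) (Fin n) ℝ} (hB : B.PosDef)
    (hP : IsUnit P.det) : (Pᵀ * B * P).PosDef := by
  have hPH : Pᴴ = Pᵀ := conjTranspose_eq_transpose_of_trivial P
  have hinj : Function.Injective (P.mulVec) :=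
    mulVec_injective_iff_isUnit.mpr ((isUnit_iff_isUnit_det _).2 hP)
  rw [← hPH]
  exact hB.conjTranspose_mul_mul_same hinj

/-- simultaneous reduction of two positive definite symmetric
matrices: there is `L ∈ GL(n,ℝ)` with `LᵀAL = Λ` and `L⁻¹B(Lᵀ)⁻¹ = Λ`, where
`Λ = diag(√λ₁,…,√λₙ)` and the `λᵢ` are the (positive real) eigenvalues of
`AB`, counted with multiplicity. -/
theorem simultaneous_symplectic_diagonalization {n : ℕ}
    (A B : Matrix (Fin n) (Fin n) ℝ)
    (hA : A.PosDef) (hAsymm : Aᵀ = A) (hB : B.PosDef) (hBsymm : Bᵀ = B) :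
    ∃ (L : Matrix (Fin n) (Fin n) ℝ) (d : Fin n → ℝ),
      IsUnit L.det ∧ (∀ i, 0 < d i) ∧
      -- the numbers (d i)² are the eigenvalues of A*B counted with multiplicity
      (A * B).charpoly = ∏ i : Fin n, (Polynomial.X - Polynomial.C ((d i) ^ 2)) ∧
      Lᵀ * A * L = Matrix.diagonal d ∧
      L⁻¹ * B * (Lᵀ)⁻¹ = Matrix.diagonal d := by
  classical
  set S := CFC.sqrt A with hSdef
  have hSps : S.PosSemidef := nonneg_iff_posSemidef.mp (CFC.sqrt_nonneg A)
  have hSS : S * S = A := CFC.sqrt_mul_sqrt_self A hA.posSemidef.nonneg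
  have hSsymm : Sᵀ = S := by
    have := hSps.1
    rwa [IsHermitian, conjTranspose_eq_transpose_of_trivial] at this
  have hSdet : IsUnit S.det := by
    have h : S.det * S.det = A.det := by rw [← det_mul, hSS]
    have := hA.det_pos
    exact isUnit_of_mul_isUnit_left (by rw [h]; exact this.ne'.isUnit)
  have hM : (S * B * S).PosDef := by
    have := my_posdef_conj hB hSdet
    rwa [hSsymm] at this
  set M := S * B * S with hMdef
  set U : Matrix (Fin n) (Fin n) ℝ := (hM.1.eigenvectorUnitary : Matrix (Fin n) (Fin n) ℝ)
    with hUdef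
  have hUtU : Uᵀ * U = 1 := by
    have := (Matrix.mem_unitaryGroup_iff').mp hM.1.eigenvectorUnitary.2
    rwa [star_eq_conjTranspose, conjTranspose_eq_transpose_of_trivial] at this
  have hUUt : U * Uᵀ = 1 := mul_eq_one_comm.2 hUtU
  set μ : Fin n → ℝ := hM.1.eigenvalues with hμdef
  have hμpos : ∀ i, 0 < μ i := fun i => hM.eigenvalues_pos i
  have hspec : Uᵀ * M * U = diagonal μ := by
    have := hM.1.conjStarAlgAut_star_eigenvectorUnitary
    rw [Unitary.conjStarAlgAut_star_apply] at this
    rwa [star_eq_conjTranspose, conjTranspose_eq_transpose_of_trivial,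
      RCLike.ofReal_real_eq_id, Function.id_comp] at this
  set d : Fin n → ℝ := fun i => Real.sqrt (μ i) with hddef
  have hdpos : ∀ i, 0 < d i := fun i => Real.sqrt_pos.mpr (hμpos i)
  have hd2 : ∀ i, d i ^ 2 = μ i := fun i => Real.sq_sqrt (hμpos i).le
  set e : Fin n → ℝ := fun i => Real.sqrt (d i) with hedef
  have hepos : ∀ i, 0 < e i := fun i => Real.sqrt_pos.mpr (hdpos i)
  have he2 : ∀ i, e i * e i = d i := fun i => Real.mul_self_sqrt (hdpos i).le
  have hDdet : IsUnit (diagonal e).det := by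
    rw [det_diagonal]
    exact (Finset.prod_pos (fun i _ => hepos i)).ne'.isUnit
  have hUdet : IsUnit U.det := by
    apply IsUnit.of_mul_eq_one Uᵀ.det
    rw [← det_mul, hUUt, det_one]
  refine ⟨S⁻¹ * U * diagonal e, d, ?_, hdpos, ?_, ?_, ?_⟩
  · rw [det_mul, det_mul]
    exact ((S.isUnit_nonsing_inv_det hSdet).mul hUdet).mul hDdet
  · -- charpoly
    have hAB : S * M * S⁻¹ = A * B := by
      rw [hMdef, ← hSS]
      simp only [Matrix.mul_assoc]
      rw [mul_nonsing_inv _ hSdet, mul_one]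
    have hMU : U * diagonal μ * U⁻¹ = M := by
      rw [inv_eq_left_inv hUtU, ← hspec]
      simp only [Matrix.mul_assoc]
      rw [hUUt, mul_one, ← Matrix.mul_assoc, hUUt, one_mul]
    calc (A * B).charpoly = M.charpoly := by rw [← hAB, my_charpoly_conj S M hSdet]
      _ = (diagonal μ).charpoly := by rw [← hMU, my_charpoly_conj U (diagonal μ) hUdet]
      _ = ∏ i : Fin n, (X - C (d i ^ 2)) := by
          rw [my_charpoly_diag]
          exact Finset.prod_congr rfl fun i _ => by rw [hd2]
  · -- LᵀAL = diagonal d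
    rw [transpose_mul, transpose_mul, transpose_nonsing_inv, hSsymm, diagonal_transpose, ← hSS]
    rw [show (diagonal e * (Uᵀ * S⁻¹)) * (S * S) * (S⁻¹ * U * diagonal e)
        = diagonal e * (Uᵀ * (S⁻¹ * (S * (S * (S⁻¹ * (U * diagonal e)))))) by
      simp only [Matrix.mul_assoc]]
    rw [nonsing_inv_mul_cancel_left _ _ hSdet, mul_nonsing_inv_cancel_left _ _ hSdet,
      ← Matrix.mul_assoc Uᵀ U, hUtU, one_mul, diagonal_mul_diagonal]
    exact congrArg _ (funext fun i => he2 i)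
  · -- L⁻¹ B (Lᵀ)⁻¹ = diagonal d
    set L := S⁻¹ * U * diagonal e with hLdef
    have hLt : Lᵀ = diagonal e * Uᵀ * S⁻¹ := by
      rw [hLdef, transpose_mul, transpose_mul, transpose_nonsing_inv, hSsymm,
        diagonal_transpose, Matrix.mul_assoc]
    have hLinv : L⁻¹ = (diagonal e)⁻¹ * Uᵀ * S := by
      apply inv_eq_left_inv
      rw [show ((diagonal e)⁻¹ * Uᵀ * S) * (S⁻¹ * U * diagonal e)
          = (diagonal e)⁻¹ * (Uᵀ * (S * (S⁻¹ * (U * diagonal e)))) by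
        simp only [Matrix.mul_assoc]]
      rw [mul_nonsing_inv_cancel_left _ _ hSdet, ← Matrix.mul_assoc Uᵀ U, hUtU, one_mul,
        nonsing_inv_mul _ hDdet]
    have hLtinv : (Lᵀ)⁻¹ = S * U * (diagonal e)⁻¹ := by
      apply inv_eq_right_inv
      rw [hLt]
      rw [show (diagonal e * Uᵀ * S⁻¹) * (S * U * (diagonal e)⁻¹)
          = diagonal e * (Uᵀ * (S⁻¹ * (S * (U * (diagonal e)⁻¹)))) by
        simp only [Matrix.mul_assoc]]
      rw [nonsing_inv_mul_cancel_left _ _ hSdet, ← Matrix.mul_assoc Uᵀ U, hUtU, one_mul,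
        mul_nonsing_inv _ hDdet]
    rw [hLinv, hLtinv]
    have : ((diagonal e)⁻¹ * Uᵀ * S) * B * (S * U * (diagonal e)⁻¹)
        = (diagonal e)⁻¹ * (Uᵀ * M * U) * (diagonal e)⁻¹ := by
      simp only [hMdef, Matrix.mul_assoc]
    have hDinv : (diagonal e)⁻¹ = diagonal (fun i => (e i)⁻¹) := by
      apply inv_eq_left_inv
      rw [diagonal_mul_diagonal]
      rw [show (fun i => (e i)⁻¹ * e i) = fun _ => (1:ℝ) from funext fun i =>
        inv_mul_cancel₀ (hepos i).ne']
      exact diagonal_one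
    rw [this, hspec, hDinv, diagonal_mul_diagonal, diagonal_mul_diagonal]
    refine congrArg diagonal (funext fun i => ?_)
    have hei := (hepos i).ne'
    show (e i)⁻¹ * μ i * (e i)⁻¹ = d i
    rw [← hd2 i, ← he2 i]
    field_simp
end
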